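/- Let p_1,...,p_n ∈ [0,1] and nonnegative weights p_1',...,p_n'. For each integer k: (Σ_i p_i'·p_i·f_k^{(i)})·(Σ_i p_i'·(1-p_i)·f_{k+1}^{(i)}) − (Σ_i p_i'·(1-p_i)·f_k^{(i)})·(Σ_i p_i'·p_i·f_{k+1}^{(i)}) = Σ_{i<j} p_i'·p_j'·(p_i − p_j)²·((f_k^{(i,j)})² − f_{k-1}^{(i,j)}·f_{k+1}^{(i,j)}), and this quantity is nonnegative. -/

import Mathlib

/-!
Removing `j` from the index set `[n] \ {i}` gives `f^{(i)}_m = p_j g_{m-1} + (1 - p_j) g_m` with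
`g = f^{(i,j)}`, and symmetrically for `f^{(j)}`. Expanding the left side as a double sum over
`(i, j)`, the terms `(i, j)` and `(j, i)` combine to `p_i' p_j' (p_i - p_j)` times the `2 × 2`
determinant of `f^{(i)}, f^{(j)}` at `k, k + 1`, which the recursion turns into
`(p_i - p_j) (g_k² - g_{k-1} g_{k+1})`. Nonnegativity is then the log-concavity of Bernoulli
sums, which survives each convolution with a Bernoulli law.
-/

open Finset

/-- Probability mass function of a sum of independent Bernoulli random variables
indexed by the finite set `I`, with parameters `p i`. -/
def bernoulliSumPMF (I : Finset ℕ) (p : ℕ → ℝ) (k : ℤ) : ℝ :=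
  if 0 ≤ k then
    ∑ S ∈ I.powersetCard k.toNat, (∏ i ∈ S, p i) * (∏ i ∈ I \ S, (1 - p i))
  else 0

def bernoulliConv (x : ℝ) (g : ℤ → ℝ) (m : ℤ) : ℝ := x * g (m - 1) + (1 - x) * g m

lemma bernoulliSumPMF_empty (p : ℕ → ℝ) :
    bernoulliSumPMF ∅ p = fun k => if k = 0 then 1 else 0 := by
  ext k
  obtain hk | rfl | hk := lt_trichotomy k 0
  · simp [bernoulliSumPMF, hk.not_ge, hk.ne]
  · simp [bernoulliSumPMF]
  · have hcard : (∅ : Finset ℕ).card < k.toNat := by simpa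
    simp [bernoulliSumPMF, hk.le, hk.ne', powersetCard_eq_empty.mpr hcard]

lemma sum_powersetCard_succ_insert {I : Finset ℕ} {a : ℕ} (ha : a ∉ I) (p : ℕ → ℝ) (m : ℕ) :
    ∑ S ∈ (insert a I).powersetCard (m + 1), (∏ i ∈ S, p i) * ∏ i ∈ insert a I \ S, (1 - p i)
      = p a * ∑ S ∈ I.powersetCard m, (∏ i ∈ S, p i) * ∏ i ∈ I \ S, (1 - p i)
        + (1 - p a) * ∑ S ∈ I.powersetCard (m + 1), (∏ i ∈ S, p i) * ∏ i ∈ I \ S, (1 - p i) := by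
  have hnotin : ∀ {S m}, S ∈ I.powersetCard m → a ∉ S := fun hS h =>
    ha ((mem_powersetCard.mp hS).1 h)
  have hdisj : Disjoint (I.powersetCard (m + 1)) ((I.powersetCard m).image (insert a)) := by
    refine disjoint_left.mpr fun S hS hS' => ?_
    obtain ⟨T, -, rfl⟩ := mem_image.mp hS'
    exact hnotin hS (mem_insert_self a T)
  have hinj : Set.InjOn (insert a) (I.powersetCard m : Set (Finset ℕ)) :=
    fun S hS T hT hST => by
      rw [← erase_insert (hnotin hS), hST, erase_insert (hnotin hT)]
  rw [powersetCard_succ_insert ha, sum_union hdisj, sum_image hinj, add_comm, mul_sum, mul_sum]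
  congr 1 <;> refine sum_congr rfl fun S hS => ?_
  · rw [insert_sdiff_insert, sdiff_insert_of_notMem ha, prod_insert (hnotin hS)]
    ring
  · rw [insert_sdiff_of_notMem _ (hnotin hS), prod_insert fun h => ha (mem_sdiff.mp h).1]
    ring

lemma bernoulliSumPMF_insert {I : Finset ℕ} {a : ℕ} (ha : a ∉ I) (p : ℕ → ℝ) :
    bernoulliSumPMF (insert a I) p = bernoulliConv (p a) (bernoulliSumPMF I p) := by
  ext k
  obtain hk | rfl | hk := lt_trichotomy k 0
  · simp only [bernoulliSumPMF, bernoulliConv]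
    rw [if_neg (by omega), if_neg (by omega), if_neg (by omega)]
    ring
  · simp [bernoulliSumPMF, bernoulliConv, prod_insert ha]
  · obtain ⟨m, rfl⟩ : ∃ m : ℕ, k = m + 1 := ⟨k.toNat - 1, by omega⟩
    simp only [bernoulliSumPMF, bernoulliConv, add_sub_cancel_right]
    rw [if_pos (by omega), if_pos (by omega), if_pos (by omega), Int.toNat_natCast,
      show ((m : ℤ) + 1).toNat = m + 1 by omega, sum_powersetCard_succ_insert ha]

lemma bernoulliSumPMF_eq_bernoulliConv_sdiff {I : Finset ℕ} {j : ℕ} (hj : j ∈ I) (p : ℕ → ℝ) :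
    bernoulliSumPMF I p = bernoulliConv (p j) (bernoulliSumPMF (I \ {j}) p) := by
  rw [sdiff_singleton_eq_erase, ← bernoulliSumPMF_insert (notMem_erase j I), insert_erase hj]

/-- Asking for `g (k - 1) * g (l + 1) ≤ g k * g l` for all `k ≤ l`, not just `k = l`, excludes
internal zeros; this stronger form is the one preserved by `bernoulliConv`. -/
structure IsLogConcaveSeq (g : ℤ → ℝ) : Prop where
  nonneg : ∀ k, 0 ≤ g k
  mul_le_mul : ∀ k l, k ≤ l → g (k - 1) * g (l + 1) ≤ g k * g l

lemma isLogConcaveSeq_delta : IsLogConcaveSeq fun k => if k = 0 then 1 else 0 where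
  nonneg k := by positivity
  mul_le_mul k l hkl := by split_ifs <;> first | omega | norm_num

lemma IsLogConcaveSeq.bernoulliConv {g : ℤ → ℝ} (hg : IsLogConcaveSeq g) {x : ℝ}
    (hx₀ : 0 ≤ x) (hx₁ : x ≤ 1) : IsLogConcaveSeq (bernoulliConv x g) where
  nonneg k := add_nonneg (mul_nonneg hx₀ (hg.nonneg _)) (mul_nonneg (by linarith) (hg.nonneg _))
  mul_le_mul k l hkl := by
    have h₁ := hg.mul_le_mul (k - 1) (l - 1) (by omega)
    have h₂ := hg.mul_le_mul k l hkl
    have h₃ : g (k - 2) * g (l + 1) ≤ g k * g (l - 1) := by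
      have h := hg.mul_le_mul (k - 1) l (by omega)
      rw [show k - 1 - 1 = k - 2 by ring] at h
      obtain rfl | hlt := hkl.eq_or_lt
      · linarith [mul_comm (g (k - 1)) (g k)]
      · exact h.trans (by simpa using hg.mul_le_mul k (l - 1) (by omega))
    simp only [_root_.bernoulliConv, show k - 1 - 1 = k - 2 by ring, show l + 1 - 1 = l by ring,
      sub_add_cancel] at h₁ ⊢
    linear_combination (x * x) * h₁ + (x * (1 - x)) * h₃ + ((1 - x) * (1 - x)) * h₂

lemma isLogConcaveSeq_bernoulliSumPMF (I : Finset ℕ) {p : ℕ → ℝ}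
    (hp : ∀ i ∈ I, 0 ≤ p i ∧ p i ≤ 1) : IsLogConcaveSeq (bernoulliSumPMF I p) := by
  induction I using Finset.induction_on with
  | empty => simpa [bernoulliSumPMF_empty] using isLogConcaveSeq_delta
  | insert a I ha ih =>
    rw [bernoulliSumPMF_insert ha]
    obtain ⟨hp₀, hp₁⟩ := hp a (mem_insert_self a I)
    exact (ih fun i hi => hp i (mem_insert_of_mem hi)).bernoulliConv hp₀ hp₁

lemma sum_mul_sum_sub_sum_mul_sum {ι R : Type*} [CommRing R] (s : Finset ι) (u v a b : ι → R) :
    (∑ i ∈ s, u i * a i) * (∑ j ∈ s, v j * b j) - (∑ i ∈ s, v i * a i) * (∑ j ∈ s, u j * b j)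
      = ∑ i ∈ s, ∑ j ∈ s, (u i * v j - v i * u j) * (a i * b j) := by
  simp only [sum_mul_sum, ← sum_sub_distrib]
  exact sum_congr rfl fun i _ => sum_congr rfl fun j _ => by ring

lemma sum_range_sum_range_eq_sum_Ioo_add_swap {M : Type*} [AddCommMonoid M] (n : ℕ)
    (F : ℕ → ℕ → M) (hF : ∀ i, F i i = 0) :
    ∑ i ∈ range n, ∑ j ∈ range n, F i j = ∑ i ∈ range n, ∑ j ∈ Ioo i n, (F i j + F j i) := by
  have hsplit : ∀ i ∈ range n,
      ∑ j ∈ range n, F i j = ∑ j ∈ range i, F i j + ∑ j ∈ Ioo i n, F i j := by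
    intro i hi
    have hin : i < n := mem_range.mp hi
    rw [range_eq_Ico, ← sum_Ico_consecutive _ (Nat.zero_le i) hin.le, ← Ioo_insert_left hin,
      sum_insert left_notMem_Ioo, hF, zero_add, ← range_eq_Ico]
  have hswap : ∑ i ∈ range n, ∑ j ∈ range i, F i j = ∑ j ∈ range n, ∑ i ∈ Ioo j n, F i j :=
    sum_comm' fun i j => by simp only [mem_range, mem_Ioo]; omega
  rw [sum_congr rfl hsplit, sum_add_distrib, hswap, ← sum_add_distrib]
  refine sum_congr rfl fun i _ => ?_
  rw [← sum_add_distrib]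
  exact sum_congr rfl fun j _ => add_comm _ _

lemma bernoulliConv_mul_sub_mul (x y : ℝ) (g : ℤ → ℝ) (k : ℤ) :
    bernoulliConv y g k * bernoulliConv x g (k + 1)
      - bernoulliConv x g k * bernoulliConv y g (k + 1)
      = (x - y) * (g k ^ 2 - g (k - 1) * g (k + 1)) := by
  simp only [bernoulliConv, add_sub_cancel_right]
  ring

lemma sum_mul_sum_sub_sum_mul_sum_of_bernoulliConv (n : ℕ) (p p' : ℕ → ℝ) (f : ℕ → ℤ → ℝ)
    (g : ℕ → ℕ → ℤ → ℝ)
    (hfg : ∀ i ∈ range n, ∀ j ∈ Ioo i n,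
      f i = bernoulliConv (p j) (g i j) ∧ f j = bernoulliConv (p i) (g i j)) (k : ℤ) :
    (∑ i ∈ range n, p' i * p i * f i k) * (∑ i ∈ range n, p' i * (1 - p i) * f i (k + 1))
      - (∑ i ∈ range n, p' i * (1 - p i) * f i k) * (∑ i ∈ range n, p' i * p i * f i (k + 1))
      = ∑ i ∈ range n, ∑ j ∈ Ioo i n,
          p' i * p' j * (p i - p j) ^ 2 * (g i j k ^ 2 - g i j (k - 1) * g i j (k + 1)) := by
  rw [sum_mul_sum_sub_sum_mul_sum, sum_range_sum_range_eq_sum_Ioo_add_swap _ _ fun i => by ring]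
  refine sum_congr rfl fun i hi => sum_congr rfl fun j hj => ?_
  obtain ⟨hfi, hfj⟩ := hfg i hi j hj
  rw [hfi, hfj]
  linear_combination (p' i * p' j * (p i - p j)) * bernoulliConv_mul_sub_mul (p i) (p j) (g i j) k

theorem shepp_olkin_glc_identity (n : ℕ) (p p' : ℕ → ℝ)
    (hp : ∀ i ∈ Finset.range n, 0 ≤ p i ∧ p i ≤ 1)
    (hp' : ∀ i ∈ Finset.range n, 0 ≤ p' i)
    (f' : ℕ → ℤ → ℝ)
    (hf' : ∀ i ∈ Finset.range n, ∀ k, f' i k = bernoulliSumPMF (Finset.range n \ {i}) p k)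
    (f'' : ℕ → ℕ → ℤ → ℝ)
    (hf'' : ∀ i ∈ Finset.range n, ∀ j ∈ Finset.range n, i ≠ j →
      ∀ k, f'' i j k = bernoulliSumPMF ((Finset.range n \ {i}) \ {j}) p k)
    (k : ℤ) :
    ((∑ i ∈ Finset.range n, p' i * p i * f' i k) *
        (∑ i ∈ Finset.range n, p' i * (1 - p i) * f' i (k + 1))
      - (∑ i ∈ Finset.range n, p' i * (1 - p i) * f' i k) *
        (∑ i ∈ Finset.range n, p' i * p i * f' i (k + 1))
      = ∑ i ∈ Finset.range n, ∑ j ∈ Finset.Ioo i n,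
          p' i * p' j * (p i - p j) ^ 2 *
            (f'' i j k ^ 2 - f'' i j (k - 1) * f'' i j (k + 1))) ∧
    0 ≤ (∑ i ∈ Finset.range n, p' i * p i * f' i k) *
          (∑ i ∈ Finset.range n, p' i * (1 - p i) * f' i (k + 1))
        - (∑ i ∈ Finset.range n, p' i * (1 - p i) * f' i k) *
          (∑ i ∈ Finset.range n, p' i * p i * f' i (k + 1)) := by
  have hpair : ∀ i ∈ range n, ∀ j ∈ Ioo i n, (f' i = bernoulliConv (p j) (f'' i j) ∧
      f' j = bernoulliConv (p i) (f'' i j)) ∧ IsLogConcaveSeq (f'' i j) := by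
    intro i hi j hj
    have hj' : j ∈ range n := mem_range.mpr (mem_Ioo.mp hj).2
    have hij : i < j := (mem_Ioo.mp hj).1
    rw [funext (hf'' i hi j hj' hij.ne), funext (hf' i hi), funext (hf' j hj')]
    refine ⟨⟨?_, ?_⟩, isLogConcaveSeq_bernoulliSumPMF _ fun l hl => hp l (by simp_all)⟩
    · exact bernoulliSumPMF_eq_bernoulliConv_sdiff (mem_sdiff.mpr ⟨hj', by simpa using hij.ne'⟩) p
    · rw [sdiff_sdiff_comm]
      exact bernoulliSumPMF_eq_bernoulliConv_sdiff (mem_sdiff.mpr ⟨hi, by simpa using hij.ne⟩) p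
  have hid := sum_mul_sum_sub_sum_mul_sum_of_bernoulliConv n p p' f' f''
    (fun i hi j hj => (hpair i hi j hj).1) k
  refine ⟨hid, hid ▸ sum_nonneg fun i hi => sum_nonneg fun j hj => ?_⟩
  have hg := (hpair i hi j hj).2.mul_le_mul k k le_rfl
  have hp'i := hp' i hi
  have hp'j := hp' j (mem_range.mpr (mem_Ioo.mp hj).2)
  have hdet : 0 ≤ f'' i j k ^ 2 - f'' i j (k - 1) * f'' i j (k + 1) := by linarith [sq (f'' i j k)]
  positivity
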